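/- If φ∈C(X,ℝ) and α is an open cover of the compact metric space X, then the sequence n ↦ p_n(φ,α) is submultiplicative: p_{n_1+n_2}(φ,α) ≤ p_{n_1}(φ,α)·p_{n_2}(φ,α) for all n_1,n_2 ≥ 1; consequently lim_{n→∞}(1/n) log p_n(φ,α) exists and equals inf_n (1/n) log p_n(φ,α). -/

import Mathlib

/-!
If `β₁` and `β₂` are finite subcovers of the joins for `w₁` and `w₂`, the sets
`f_{w₂}⁻¹ B₁ ∩ B₂` (`Bᵢ ∈ βᵢ`) form a finite subcover of the join for `w₁w₂`. Since
`S_{w₁w₂}φ = S_{w₂}φ + S_{w₁}φ ∘ f_{w₂}`, the supremum of `e^{S_{w₁w₂}φ}` over such a set is at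
most the product of the two suprema, so `p_{w₁w₂} ≤ p_{w₁} p_{w₂}`; averaging over words of
lengths `n₁` and `n₂` gives `p_{n₁+n₂} ≤ p_{n₁} p_{n₂}`. As `p_n ≥ e^{n min φ} > 0`, the sequence
`log p_n` is subadditive with `log p_n / n` bounded below, and Fekete's lemma gives the limit.
-/

open Filter Topology MeasureTheory Set

namespace FSA

/-- `f_w = f_{w₁} ∘ ⋯ ∘ f_{w_k}` for the word `w = [w₁,…,w_k]`; the empty word acts as
the identity. -/
def wordMap {X : Type*} {ι : Type*} (f : ι → X → X) : List ι → X → X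
  | [] => id
  | a :: t => f a ∘ wordMap f t

/-- `(S_wφ)(x) = Σ_{w'} φ(f_{w'}x)`, summing over the `|w|` words `w'` consisting of the
empty word and the proper suffixes of `w`. -/
noncomputable def birkhoff {X : Type*} {ι : Type*} (f : ι → X → X) (φ : X → ℝ)
    (w : List ι) (x : X) : ℝ :=
  (w.tails.tail.map fun w' => φ (wordMap f w' x)).sum

section Cover

variable {X : Type*} {ι : Type*}

/-- `α` is an open cover of `X`. -/
def IsOpenCover [TopologicalSpace X] (α : Set (Set X)) : Prop :=
  (∀ A ∈ α, IsOpen A) ∧ ⋃₀ α = Set.univ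

/-- The members of the join `⋁_{w'≤w} f_{w'}⁻¹ α`, the join taken over the `|w|` words `w'`
consisting of the empty word and the proper suffixes of `w`. -/
def coverJoin (f : ι → X → X) (α : Set (Set X)) (w : List ι) : Set (Set X) :=
  {B | ∃ c : List ι → Set X, (∀ w' ∈ w.tails.tail, c w' ∈ α) ∧
    B = ⋂ w' ∈ w.tails.tail, wordMap f w' ⁻¹' c w'}

/-- `β` is a finite subcover of the join `⋁_{w'≤w} f_{w'}⁻¹ α`. -/
def IsFiniteSubcover (f : ι → X → X) (α : Set (Set X)) (w : List ι)
    (β : Finset (Set X)) : Prop :=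
  (↑β : Set (Set X)) ⊆ coverJoin f α w ∧ ⋃₀ (↑β : Set (Set X)) = Set.univ

/-- `q_w(φ,α) = inf { Σ_{B∈β} inf_{x∈B} e^{(S_wφ)(x)} : β a finite subcover }`. -/
noncomputable def qword (f : ι → X → X) (φ : X → ℝ) (α : Set (Set X)) (w : List ι) : ℝ :=
  sInf {s : ℝ | ∃ β : Finset (Set X), IsFiniteSubcover f α w β ∧
    s = ∑ B ∈ β, sInf ((fun x => Real.exp (birkhoff f φ w x)) '' B)}

/-- `p_w(φ,α) = inf { Σ_{B∈β} sup_{x∈B} e^{(S_wφ)(x)} : β a finite subcover }`. -/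
noncomputable def pword (f : ι → X → X) (φ : X → ℝ) (α : Set (Set X)) (w : List ι) : ℝ :=
  sInf {s : ℝ | ∃ β : Finset (Set X), IsFiniteSubcover f α w β ∧
    s = ∑ B ∈ β, sSup ((fun x => Real.exp (birkhoff f φ w x)) '' B)}

/-- `q_n(φ,α) = m^{-n} Σ_{|w|=n} q_w(φ,α)`. -/
noncomputable def qn [Fintype ι] (f : ι → X → X) (φ : X → ℝ) (α : Set (Set X)) (n : ℕ) : ℝ :=
  (1 / (Fintype.card ι : ℝ) ^ n) * ∑ w : Fin n → ι, qword f φ α (List.ofFn w)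

/-- `p_n(φ,α) = m^{-n} Σ_{|w|=n} p_w(φ,α)`. -/
noncomputable def pn [Fintype ι] (f : ι → X → X) (φ : X → ℝ) (α : Set (Set X)) (n : ℕ) : ℝ :=
  (1 / (Fintype.card ι : ℝ) ^ n) * ∑ w : Fin n → ι, pword f φ α (List.ofFn w)

end Cover

section Words

variable {X ι : Type*} (f : ι → X → X)

lemma wordMap_append (a b : List ι) : wordMap f (a ++ b) = wordMap f a ∘ wordMap f b := by
  induction a with
  | nil => rfl
  | cons i t ih => simp only [List.cons_append, wordMap, ih, Function.comp_assoc]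

lemma continuous_wordMap [TopologicalSpace X] (hf : ∀ i, Continuous (f i)) :
    ∀ w : List ι, Continuous (wordMap f w)
  | [] => continuous_id
  | i :: t => (hf i).comp (continuous_wordMap hf t)

lemma tails_tail_append (a b : List ι) :
    (a ++ b).tails.tail = a.tails.tail.map (· ++ b) ++ b.tails.tail := by
  cases a <;> simp [List.tails_append]

lemma length_lt_of_mem_tails_tail {l u : List ι} (h : u ∈ l.tails.tail) : u.length < l.length := by
  cases l with
  | nil => simp at h
  | cons a t =>
    simp only [List.tails_cons, List.tail_cons, List.mem_tails] at h
    simpa using h.length_le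

lemma biInter_tails_tail_append (g : List ι → Set X) (a b : List ι) :
    ⋂ u ∈ (a ++ b).tails.tail, g u =
      (⋂ v ∈ a.tails.tail, g (v ++ b)) ∩ ⋂ u ∈ b.tails.tail, g u := by
  rw [tails_tail_append]
  ext x
  simp only [mem_inter_iff, mem_iInter, List.mem_append, List.mem_map, or_imp, forall_and,
    forall_exists_index, and_imp, forall_apply_eq_imp_iff₂]

lemma birkhoff_append (φ : X → ℝ) (a b : List ι) (x : X) :
    birkhoff f φ (a ++ b) x = birkhoff f φ b x + birkhoff f φ a (wordMap f b x) := by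
  simp only [birkhoff, tails_tail_append, List.map_append, List.sum_append, List.map_map, add_comm]
  simp [Function.comp_def, wordMap_append]

lemma birkhoff_le {φ : X → ℝ} {C : ℝ} (hC : ∀ x, φ x ≤ C) (w : List ι) (x : X) :
    birkhoff f φ w x ≤ w.length * C := by
  have h := List.sum_le_card_nsmul (w.tails.tail.map fun u => φ (wordMap f u x)) C
    (by simp only [List.mem_map]; rintro _ ⟨u, -, rfl⟩; exact hC _)
  simpa [birkhoff] using h

lemma le_birkhoff {φ : X → ℝ} {c : ℝ} (hc : ∀ x, c ≤ φ x) (w : List ι) (x : X) :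
    w.length * c ≤ birkhoff f φ w x := by
  have h := List.card_nsmul_le_sum (w.tails.tail.map fun u => φ (wordMap f u x)) c
    (by simp only [List.mem_map]; rintro _ ⟨u, -, rfl⟩; exact hc _)
  simpa [birkhoff] using h

end Words

section Join

variable {X ι : Type*} {f : ι → X → X} {α : Set (Set X)}

lemma isOpen_of_mem_coverJoin [TopologicalSpace X] (hf : ∀ i, Continuous (f i))
    (hα : ∀ A ∈ α, IsOpen A) {w : List ι} {B : Set X} (hB : B ∈ coverJoin f α w) : IsOpen B := by
  obtain ⟨c, hc, rfl⟩ := hB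
  exact (List.finite_toSet _).isOpen_biInter fun u hu =>
    (hα _ (hc u hu)).preimage (continuous_wordMap f hf u)

lemma exists_mem_coverJoin (hα : ⋃₀ α = univ) (w : List ι) (x : X) :
    ∃ B ∈ coverJoin f α w, x ∈ B := by
  choose c hcα hxc using fun u : List ι => mem_sUnion.1 (hα ▸ mem_univ (wordMap f u x))
  exact ⟨_, ⟨c, fun u _ => hcα u, rfl⟩, mem_iInter₂.2 fun u _ => hxc u⟩

lemma exists_isFiniteSubcover [TopologicalSpace X] [CompactSpace X] (hf : ∀ i, Continuous (f i))
    (hα : IsOpenCover α) (w : List ι) : ∃ β, IsFiniteSubcover f α w β := by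
  obtain ⟨β, hβ, hβfin, hcov⟩ := isCompact_univ.elim_finite_subcover_image (c := id)
    (fun B hB => isOpen_of_mem_coverJoin hf hα.1 hB)
    (fun x _ => by
      obtain ⟨B, hB, hx⟩ := exists_mem_coverJoin hα.2 w x
      exact mem_biUnion hB hx)
  refine ⟨hβfin.toFinset, by simpa using hβ, eq_univ_of_univ_subset ?_⟩
  simpa [sUnion_eq_biUnion] using hcov

lemma preimage_inter_mem_coverJoin_append {w₁ w₂ : List ι} {B₁ B₂ : Set X}
    (h₁ : B₁ ∈ coverJoin f α w₁) (h₂ : B₂ ∈ coverJoin f α w₂) :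
    wordMap f w₂ ⁻¹' B₁ ∩ B₂ ∈ coverJoin f α (w₁ ++ w₂) := by
  obtain ⟨c₁, hc₁, rfl⟩ := h₁
  obtain ⟨c₂, hc₂, rfl⟩ := h₂
  -- A proper suffix of `w₁ ++ w₂` is either shorter than `w₂` or of the form `v ++ w₂`.
  let c : List ι → Set X := fun u =>
    if u.length < w₂.length then c₂ u else c₁ (u.rdrop w₂.length)
  have hc_left (v : List ι) : c (v ++ w₂) = c₁ v := by simp [c]
  have hc_right {u : List ι} (hu : u ∈ w₂.tails.tail) : c u = c₂ u :=
    if_pos (length_lt_of_mem_tails_tail hu)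
  refine ⟨c, ?_, ?_⟩
  · rw [tails_tail_append]
    simp only [List.mem_append, List.mem_map]
    rintro u (⟨v, hv, rfl⟩ | hu)
    · exact hc_left v ▸ hc₁ v hv
    · exact (hc_right hu).symm ▸ hc₂ u hu
  · rw [biInter_tails_tail_append, preimage_iInter₂]
    congr 1
    · exact iInter₂_congr fun v _ => by rw [hc_left, wordMap_append, preimage_comp]
    · exact iInter₂_congr fun u hu => by rw [hc_right hu]

open Classical in
lemma IsFiniteSubcover.append {w₁ w₂ : List ι} {β₁ β₂ : Finset (Set X)}
    (h₁ : IsFiniteSubcover f α w₁ β₁) (h₂ : IsFiniteSubcover f α w₂ β₂) :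
    IsFiniteSubcover f α (w₁ ++ w₂) ((β₁ ×ˢ β₂).image fun p => wordMap f w₂ ⁻¹' p.1 ∩ p.2) := by
  refine ⟨?_, eq_univ_of_forall fun x => ?_⟩
  · simp only [Finset.coe_image, Finset.coe_product, image_subset_iff]
    rintro ⟨B₁, B₂⟩ ⟨hB₁, hB₂⟩
    exact preimage_inter_mem_coverJoin_append (h₁.1 hB₁) (h₂.1 hB₂)
  · obtain ⟨B₂, hB₂, hx₂⟩ := mem_sUnion.1 (h₂.2 ▸ mem_univ x)
    obtain ⟨B₁, hB₁, hx₁⟩ := mem_sUnion.1 (h₁.2 ▸ mem_univ (wordMap f w₂ x))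
    exact ⟨_, Finset.mem_image.2 ⟨(B₁, B₂), Finset.mem_product.2 ⟨hB₁, hB₂⟩, rfl⟩, hx₁, hx₂⟩

end Join

lemma le_sInf_mul_sInf {s t : Set ℝ} {a : ℝ} (hs : s.Nonempty) (ht : t.Nonempty)
    (hs₀ : ∀ x ∈ s, 0 ≤ x) (ht₀ : ∀ y ∈ t, 0 ≤ y) (h : ∀ x ∈ s, ∀ y ∈ t, a ≤ x * y) :
    a ≤ sInf s * sInf t := by
  have h_left : ∀ y ∈ t, a ≤ sInf s * y := fun y hy => by
    rw [mul_comm, ← smul_eq_mul, ← Real.sInf_smul_of_nonneg (ht₀ y hy)]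
    refine le_csInf hs.smul_set ?_
    rintro _ ⟨x, hx, rfl⟩
    exact (h x hx y hy).trans_eq (mul_comm _ _)
  rw [← smul_eq_mul, ← Real.sInf_smul_of_nonneg (Real.sInf_nonneg hs₀)]
  exact le_csInf ht.smul_set (by rintro _ ⟨y, hy, rfl⟩; exact h_left y hy)

section Pressure

variable {X ι : Type*} {f : ι → X → X} {φ : X → ℝ} {α : Set (Set X)}

variable (f φ) in
noncomputable def supExp (w : List ι) (B : Set X) : ℝ :=
  sSup ((fun x => Real.exp (birkhoff f φ w x)) '' B)

lemma supExp_nonneg (w : List ι) (B : Set X) : 0 ≤ supExp f φ w B :=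
  Real.sSup_nonneg (by rintro _ ⟨x, -, rfl⟩; exact (Real.exp_pos _).le)

lemma sum_supExp_nonneg (w : List ι) (β : Finset (Set X)) : 0 ≤ ∑ B ∈ β, supExp f φ w B :=
  Finset.sum_nonneg fun B _ => supExp_nonneg w B

lemma exp_birkhoff_le_supExp {C : ℝ} (hC : ∀ x, φ x ≤ C) {w : List ι} {B : Set X} {x : X}
    (hx : x ∈ B) : Real.exp (birkhoff f φ w x) ≤ supExp f φ w B := by
  refine le_csSup ⟨Real.exp (w.length * C), ?_⟩ (mem_image_of_mem _ hx)
  rintro _ ⟨y, -, rfl⟩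
  exact Real.exp_le_exp.2 (birkhoff_le f hC w y)

lemma supExp_append_le {C : ℝ} (hC : ∀ x, φ x ≤ C) (w₁ w₂ : List ι) (B₁ B₂ : Set X) :
    supExp f φ (w₁ ++ w₂) (wordMap f w₂ ⁻¹' B₁ ∩ B₂) ≤ supExp f φ w₁ B₁ * supExp f φ w₂ B₂ := by
  refine Real.sSup_le ?_ (mul_nonneg (supExp_nonneg _ _) (supExp_nonneg _ _))
  rintro _ ⟨x, ⟨hx₁, hx₂⟩, rfl⟩
  dsimp only
  rw [birkhoff_append, Real.exp_add, mul_comm]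
  exact mul_le_mul (exp_birkhoff_le_supExp hC hx₁) (exp_birkhoff_le_supExp hC hx₂)
    (Real.exp_pos _).le (supExp_nonneg _ _)

open Classical in
lemma sum_supExp_append_le {C : ℝ} (hC : ∀ x, φ x ≤ C) (w₁ w₂ : List ι)
    (β₁ β₂ : Finset (Set X)) :
    ∑ B ∈ (β₁ ×ˢ β₂).image (fun p => wordMap f w₂ ⁻¹' p.1 ∩ p.2), supExp f φ (w₁ ++ w₂) B ≤
      (∑ B ∈ β₁, supExp f φ w₁ B) * ∑ B ∈ β₂, supExp f φ w₂ B := by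
  calc _ ≤ ∑ p ∈ β₁ ×ˢ β₂, supExp f φ (w₁ ++ w₂) (wordMap f w₂ ⁻¹' p.1 ∩ p.2) :=
        Finset.sum_image_le_of_nonneg fun B _ => supExp_nonneg _ _
    _ ≤ ∑ p ∈ β₁ ×ˢ β₂, supExp f φ w₁ p.1 * supExp f φ w₂ p.2 :=
        Finset.sum_le_sum fun p _ => supExp_append_le hC w₁ w₂ p.1 p.2
    _ = _ := by rw [Finset.sum_product, Finset.sum_mul_sum]

lemma pword_le_sum_supExp {w : List ι} {β : Finset (Set X)} (hβ : IsFiniteSubcover f α w β) :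
    pword f φ α w ≤ ∑ B ∈ β, supExp f φ w B :=
  csInf_le ⟨0, by rintro _ ⟨β, -, rfl⟩; exact sum_supExp_nonneg w β⟩ ⟨β, hβ, rfl⟩

variable [TopologicalSpace X] [CompactSpace X]

lemma le_pword (hf : ∀ i, Continuous (f i)) (hα : IsOpenCover α) {w : List ι} {a : ℝ}
    (h : ∀ β, IsFiniteSubcover f α w β → a ≤ ∑ B ∈ β, supExp f φ w B) : a ≤ pword f φ α w := by
  obtain ⟨β, hβ⟩ := exists_isFiniteSubcover hf hα w
  exact le_csInf ⟨_, β, hβ, rfl⟩ (by rintro _ ⟨β, hβ, rfl⟩; exact h β hβ)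

lemma pword_append_le (hf : ∀ i, Continuous (f i)) (hα : IsOpenCover α) {C : ℝ}
    (hC : ∀ x, φ x ≤ C) (w₁ w₂ : List ι) :
    pword f φ α (w₁ ++ w₂) ≤ pword f φ α w₁ * pword f φ α w₂ := by
  classical
  obtain ⟨β₁, hβ₁⟩ := exists_isFiniteSubcover hf hα w₁
  obtain ⟨β₂, hβ₂⟩ := exists_isFiniteSubcover hf hα w₂
  refine le_sInf_mul_sInf ⟨_, β₁, hβ₁, rfl⟩ ⟨_, β₂, hβ₂, rfl⟩
    (by rintro _ ⟨β, -, rfl⟩; exact sum_supExp_nonneg w₁ β)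
    (by rintro _ ⟨β, -, rfl⟩; exact sum_supExp_nonneg w₂ β) ?_
  rintro _ ⟨β₁, hβ₁, rfl⟩ _ ⟨β₂, hβ₂, rfl⟩
  exact (pword_le_sum_supExp (hβ₁.append hβ₂)).trans (sum_supExp_append_le hC w₁ w₂ β₁ β₂)

lemma exp_mul_le_pword [Nonempty X] (hf : ∀ i, Continuous (f i)) (hα : IsOpenCover α) {c C : ℝ}
    (hc : ∀ x, c ≤ φ x) (hC : ∀ x, φ x ≤ C) (w : List ι) :
    Real.exp (w.length * c) ≤ pword f φ α w := by
  refine le_pword hf hα fun β hβ => ?_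
  obtain ⟨x⟩ := ‹Nonempty X›
  obtain ⟨B, hB, hx⟩ := mem_sUnion.1 (hβ.2 ▸ mem_univ x)
  calc Real.exp (w.length * c) ≤ Real.exp (birkhoff f φ w x) :=
        Real.exp_le_exp.2 (le_birkhoff f hc w x)
    _ ≤ supExp f φ w B := exp_birkhoff_le_supExp hC hx
    _ ≤ ∑ B ∈ β, supExp f φ w B :=
        Finset.single_le_sum (f := supExp f φ w) (fun B _ => supExp_nonneg _ _) hB

end Pressure

section Average

variable {X ι : Type*} [Fintype ι] {f : ι → X → X} {φ : X → ℝ} {α : Set (Set X)}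

lemma pn_add_le (h : ∀ a b : List ι, pword f φ α (a ++ b) ≤ pword f φ α a * pword f φ α b)
    (n₁ n₂ : ℕ) : pn f φ α (n₁ + n₂) ≤ pn f φ α n₁ * pn f φ α n₂ := by
  have hsum : ∑ w : Fin (n₁ + n₂) → ι, pword f φ α (List.ofFn w) ≤
      (∑ a : Fin n₁ → ι, pword f φ α (List.ofFn a)) *
        ∑ b : Fin n₂ → ι, pword f φ α (List.ofFn b) := by
    rw [Fintype.sum_mul_sum, ← Fintype.sum_prod_type', ← (Fin.appendEquiv n₁ n₂).sum_comp]
    exact Finset.sum_le_sum fun p _ => by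
      simpa [Fin.appendEquiv, List.ofFn_fin_append] using h (List.ofFn p.1) (List.ofFn p.2)
  calc pn f φ α (n₁ + n₂)
      ≤ 1 / (Fintype.card ι : ℝ) ^ (n₁ + n₂) *
          ((∑ a : Fin n₁ → ι, pword f φ α (List.ofFn a)) *
            ∑ b : Fin n₂ → ι, pword f φ α (List.ofFn b)) :=
        mul_le_mul_of_nonneg_left hsum (by positivity)
    _ = pn f φ α n₁ * pn f φ α n₂ := by rw [pn, pn, pow_add]; ring

lemma le_pn [Nonempty ι] {n : ℕ} {b : ℝ} (h : ∀ w : List ι, w.length = n → b ≤ pword f φ α w) :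
    b ≤ pn f φ α n := by
  rw [pn, one_div, ← div_eq_inv_mul, le_div_iff₀ (by positivity)]
  calc b * (Fintype.card ι : ℝ) ^ n = ∑ _w : Fin n → ι, b := by simp [mul_comm]
    _ ≤ _ := Finset.sum_le_sum fun w _ => h _ (List.length_ofFn)

end Average

lemma _root_.Subadditive.lim_eq_iInf {u : ℕ → ℝ} (h : Subadditive u) :
    h.lim = ⨅ k : {k : ℕ // 0 < k}, u k / k := by
  rw [Subadditive.lim, sInf_image']
  rfl

lemma tendsto_log_div_of_mul_le {u : ℕ → ℝ} {c : ℝ} (hlow : ∀ n : ℕ, Real.exp (n * c) ≤ u n)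
    (hmul : ∀ m n, u (m + n) ≤ u m * u n) :
    Tendsto (fun n : ℕ => Real.log (u n) / n) atTop
      (𝓝 (⨅ k : {k : ℕ // 0 < k}, Real.log (u k) / k)) := by
  have hpos (n : ℕ) : 0 < u n := (Real.exp_pos _).trans_le (hlow n)
  have hsub : Subadditive fun n => Real.log (u n) := fun m n => by
    rw [← Real.log_mul (hpos m).ne' (hpos n).ne']
    exact Real.log_le_log (hpos _) (hmul m n)
  have hbdd : BddBelow (range fun n : ℕ => Real.log (u n) / n) := by
    refine ⟨min c 0, forall_mem_range.2 fun n => ?_⟩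
    rcases n.eq_zero_or_pos with rfl | hn
    · simp
    rw [le_div_iff₀ (by positivity)]
    calc min c 0 * n ≤ n * c := by rw [mul_comm]; gcongr; exact min_le_left c 0
      _ = Real.log (Real.exp (n * c)) := (Real.log_exp _).symm
      _ ≤ Real.log (u n) := Real.log_le_log (Real.exp_pos _) (hlow n)
  rw [← hsub.lim_eq_iInf]
  exact hsub.tendsto_lim hbdd

/-- For an open cover `α`, `n ↦ p_n(φ,α)` is submultiplicative, and
consequently `lim_{n→∞} (1/n) log p_n(φ,α)` exists and equals
`inf_{n≥1} (1/n) log p_n(φ,α)`. -/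
theorem stmt_5 {X : Type*} [MetricSpace X] [CompactSpace X] [Nonempty X]
    {ι : Type*} [Fintype ι] [Nonempty ι]
    (f : ι → X → X) (hf : ∀ i, Continuous (f i))
    (φ : X → ℝ) (hφ : Continuous φ)
    (α : Set (Set X)) (hα : IsOpenCover α) :
    (∀ n₁ n₂ : ℕ, 1 ≤ n₁ → 1 ≤ n₂ →
      pn f φ α (n₁ + n₂) ≤ pn f φ α n₁ * pn f φ α n₂) ∧
    Filter.Tendsto (fun n : ℕ => Real.log (pn f φ α n) / (n : ℝ)) atTop
      (𝓝 (⨅ k : {k : ℕ // 0 < k}, Real.log (pn f φ α k.1) / (k.1 : ℝ))) := by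
  obtain ⟨c, hc⟩ := (isCompact_range hφ).bddBelow
  obtain ⟨C, hC⟩ := (isCompact_range hφ).bddAbove
  replace hc : ∀ x, c ≤ φ x := fun x => hc (mem_range_self x)
  replace hC : ∀ x, φ x ≤ C := fun x => hC (mem_range_self x)
  have hmul := pn_add_le (pword_append_le hf hα hC)
  have hlow (n : ℕ) : Real.exp (n * c) ≤ pn f φ α n :=
    le_pn fun w hw => hw ▸ exp_mul_le_pword hf hα hc hC w
  exact ⟨fun n₁ n₂ _ _ => hmul n₁ n₂, tendsto_log_div_of_mul_le hlow hmul⟩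

end FSA
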